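/- arXiv:2511.15554 — 7 statements merged into one kernel-verified Lean document; each statement's English description precedes it below -/
import Mathlib

section
/- (Chemicality for quadratic parts, Lemma 3.7) Let q_i(x) = β_{i,i} x_i² + ∑_{j∈J_i} β_{i,j} x_j² + ∑_{j∈J_i} γ_{i,j} x_i x_j + ∑_{(k,l)∈π(J_i), k≠l} δ_{i,k,l} x_k x_l, where β_{i,i} ≥ 0, and for all j,k,l ∈ J_i (indices ≠ i): β_{i,j} ≥ 0, δ_{i,k,l} ≥ 0, γ_{i,j} ≤ 0. Suppose a ∈ ℝ^N with positive entries satisfies β_{i,i} a_i ≥ ∑_{j∈J_i} (−γ_{i,j}) a_j and, for every j ∈ J_i, (−γ_{i,j}) a_i ≥ 2β_{i,j} a_j + ∑_{l∈J_i, l≠j} δ_{i,j,l} a_l. Then there exists μ₀ > 0 such that for every μ ∈ (0, μ₀), the function x̄ ↦ q_i(x̄ − a/μ) is chemical with respect to coordinate i. -/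
/-!
Substituting `u = μ • x`, homogeneity gives `q(x - a/μ) = q(u - a) / μ²`, so `μ` plays no role and
any `μ₀ > 0` works. For `u` with `u i = 0`, expanding `q(u - a)` yields the constant term `q(a)`,
a linear term `-∑ u_j (2 β_j a_j + γ_j a_i + ∑_{l ≠ j} δ_{j,l} a_l)` and the quadratic term `q(u)`.
The first is nonnegative by the inequality on `β_{i,i} a_i`, the second by the inequalities
indexed by `j ∈ J`, and the third because `u ≥ 0` on `J` and `q(u)` has only the monomials
`β_j u_j²` and `δ_{k,l} u_k u_l` left.
-/

def IsChemical {N : ℕ} (i : Fin N) (f : (Fin N → ℝ) → ℝ) : Prop :=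
  ∀ x : Fin N → ℝ, x i = 0 → (∀ j, j ≠ i → 0 ≤ x j) → 0 ≤ f x

theorem Finset.sum_sum_filter_lt_add_swap {ι M : Type*} [LinearOrder ι] [AddCommMonoid M]
    (s : Finset ι) (f : ι → ι → M) :
    ∑ k ∈ s, ∑ l ∈ s with k < l, (f k l + f l k) = ∑ k ∈ s, ∑ l ∈ s.erase k, f k l := by
  have hswap : ∑ k ∈ s, ∑ l ∈ s with k < l, f l k = ∑ k ∈ s, ∑ l ∈ s with l < k, f k l :=
    Finset.sum_comm' fun k l => by simp only [Finset.mem_filter]; tauto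
  simp only [Finset.sum_add_distrib]
  rw [hswap, ← Finset.sum_add_distrib]
  simp only [← Finset.filter_ne', Finset.sum_filter, ← Finset.sum_add_distrib]
  refine Finset.sum_congr rfl fun k _ => Finset.sum_congr rfl fun l _ => ?_
  rcases lt_trichotomy k l with h | rfl | h
  · simp [h, h.ne', h.not_gt]
  · simp
  · simp [h, h.ne, h.not_gt]

namespace QuadraticPart

open Finset

variable {ι : Type*} [LinearOrder ι] (i : ι) (J : Finset ι) (βii : ℝ) (β γ : ι → ℝ)
  (δ : ι → ι → ℝ)

def eval (y : ι → ℝ) : ℝ :=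
  βii * (y i)^2 + (∑ j ∈ J, β j * (y j)^2) + (∑ j ∈ J, γ j * y i * y j)
    + ∑ k ∈ J, ∑ l ∈ J.filter (fun l => k < l), δ k l * y k * y l

theorem eval_smul (c : ℝ) (y : ι → ℝ) :
    eval i J βii β γ δ (c • y) = c ^ 2 * eval i J βii β γ δ y := by
  simp only [eval, Pi.smul_apply, smul_eq_mul, mul_add, mul_sum]
  ring_nf

theorem eval_sub_of_eq_zero (hδ : ∀ k l, δ k l = δ l k) {u : ι → ℝ} (hu : u i = 0)
    (a : ι → ℝ) :
    eval i J βii β γ δ (u - a) = eval i J βii β γ δ u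
      - ∑ j ∈ J, u j * (2 * β j * a j + γ j * a i + ∑ l ∈ J.erase j, δ j l * a l)
      + eval i J βii β γ δ a := by
  have hpairs : ∑ j ∈ J, u j * ∑ l ∈ J.erase j, δ j l * a l
      = ∑ k ∈ J, ∑ l ∈ J with k < l, (δ k l * u k * a l + δ l k * u l * a k) := by
    rw [sum_sum_filter_lt_add_swap]
    exact sum_congr rfl fun j _ => by rw [mul_sum]; exact sum_congr rfl fun l _ => by ring
  simp only [eval, Pi.sub_apply, hu, mul_zero, zero_mul, sum_const_zero, mul_add, sum_add_distrib,
    hpairs]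
  have hβpart : ∑ j ∈ J, β j * (u j - a j) ^ 2
      = ∑ j ∈ J, β j * u j ^ 2 - ∑ j ∈ J, u j * (2 * β j * a j) + ∑ j ∈ J, β j * a j ^ 2 := by
    rw [← sum_sub_distrib, ← sum_add_distrib]
    exact sum_congr rfl fun j _ => by ring
  have hγpart : ∑ j ∈ J, γ j * (0 - a i) * (u j - a j)
      = - ∑ j ∈ J, u j * (γ j * a i) + ∑ j ∈ J, γ j * a i * a j := by
    rw [← sum_neg_distrib, ← sum_add_distrib]
    exact sum_congr rfl fun j _ => by ring
  have hδpart : ∑ k ∈ J, ∑ l ∈ J with k < l, δ k l * (u k - a k) * (u l - a l)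
      = ∑ k ∈ J, ∑ l ∈ J with k < l, δ k l * u k * u l
        - (∑ k ∈ J, ∑ l ∈ J with k < l, δ k l * u k * a l
          + ∑ k ∈ J, ∑ l ∈ J with k < l, δ l k * u l * a k)
        + ∑ k ∈ J, ∑ l ∈ J with k < l, δ k l * a k * a l := by
    simp only [← sum_add_distrib, ← sum_sub_distrib]
    exact sum_congr rfl fun k _ => sum_congr rfl fun l _ => by rw [hδ l k]; ring
  rw [hβpart, hγpart, hδpart]
  ring

theorem sum_pairs_nonneg (hδ : ∀ k ∈ J, ∀ l ∈ J, k ≠ l → 0 ≤ δ k l) {y : ι → ℝ}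
    (hy : ∀ j ∈ J, 0 ≤ y j) : 0 ≤ ∑ k ∈ J, ∑ l ∈ J with k < l, δ k l * y k * y l :=
  sum_nonneg fun k hk => sum_nonneg fun l hl => by
    rw [mem_filter] at hl
    exact mul_nonneg (mul_nonneg (hδ k hk l hl.1 hl.2.ne) (hy k hk)) (hy l hl.1)

theorem eval_nonneg_of_eq_zero (hβ : ∀ j ∈ J, 0 ≤ β j)
    (hδ : ∀ k ∈ J, ∀ l ∈ J, k ≠ l → 0 ≤ δ k l) {u : ι → ℝ} (hui : u i = 0)
    (hu : ∀ j ∈ J, 0 ≤ u j) : 0 ≤ eval i J βii β γ δ u := by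
  have hβsum : 0 ≤ ∑ j ∈ J, β j * u j ^ 2 :=
    sum_nonneg fun j hj => mul_nonneg (hβ j hj) (sq_nonneg _)
  simp only [eval, hui, mul_zero, zero_mul, sum_const_zero]
  linarith [sum_pairs_nonneg J δ hδ hu]

theorem eval_nonneg_of_pos (hβ : ∀ j ∈ J, 0 ≤ β j)
    (hδ : ∀ k ∈ J, ∀ l ∈ J, k ≠ l → 0 ≤ δ k l) {a : ι → ℝ} (hai : 0 < a i)
    (ha : ∀ j ∈ J, 0 ≤ a j) (h1 : ∑ j ∈ J, (-γ j) * a j ≤ βii * a i) :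
    0 ≤ eval i J βii β γ δ a := by
  have hβsum : 0 ≤ ∑ j ∈ J, β j * a j ^ 2 :=
    sum_nonneg fun j hj => mul_nonneg (hβ j hj) (sq_nonneg _)
  have hγsum : ∑ j ∈ J, γ j * a i * a j = a i * -∑ j ∈ J, (-γ j) * a j := by
    rw [mul_neg, mul_sum, ← sum_neg_distrib]
    exact sum_congr rfl fun j _ => by ring
  have hcross : 0 ≤ a i * (βii * a i - ∑ j ∈ J, (-γ j) * a j) :=
    mul_nonneg hai.le (sub_nonneg.2 h1)
  rw [eval, hγsum]
  linarith [sum_pairs_nonneg J δ hδ ha]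

theorem eval_sub_nonneg (hβ : ∀ j ∈ J, 0 ≤ β j) (hδ : ∀ k ∈ J, ∀ l ∈ J, k ≠ l → 0 ≤ δ k l)
    (hδsymm : ∀ k l, δ k l = δ l k) {a : ι → ℝ} (hai : 0 < a i) (ha : ∀ j ∈ J, 0 ≤ a j)
    (h1 : ∑ j ∈ J, (-γ j) * a j ≤ βii * a i)
    (h2 : ∀ j ∈ J, 2 * β j * a j + ∑ l ∈ J.erase j, δ j l * a l ≤ (-γ j) * a i)
    {u : ι → ℝ} (hui : u i = 0) (hu : ∀ j ∈ J, 0 ≤ u j) :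
    0 ≤ eval i J βii β γ δ (u - a) := by
  have hlin : ∑ j ∈ J, u j * (2 * β j * a j + γ j * a i + ∑ l ∈ J.erase j, δ j l * a l) ≤ 0 :=
    sum_nonpos fun j hj => mul_nonpos_of_nonneg_of_nonpos (hu j hj) (by linarith [h2 j hj])
  rw [eval_sub_of_eq_zero i J βii β γ δ hδsymm hui]
  linarith [eval_nonneg_of_eq_zero i J βii β γ δ hβ hδ hui hu,
    eval_nonneg_of_pos i J βii β γ δ hβ hδ hai ha h1]

end QuadraticPart

theorem stmt8_general {N : ℕ} (i : Fin N) (J : Finset (Fin N)) (hiJ : i ∉ J)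
    (βii : ℝ)
    (β γ : Fin N → ℝ) (δ : Fin N → Fin N → ℝ)
    (hβ : ∀ j ∈ J, 0 ≤ β j)
    (hδ : ∀ k ∈ J, ∀ l ∈ J, k ≠ l → 0 ≤ δ k l)
    (hδsymm : ∀ k l, δ k l = δ l k)
    (a : Fin N → ℝ) (ha : ∀ j, 0 < a j)
    (h1 : ∑ j ∈ J, (-γ j) * a j ≤ βii * a i)
    (h2 : ∀ j ∈ J, 2 * β j * a j + ∑ l ∈ J.erase j, δ j l * a l ≤ (-γ j) * a i) :
    ∃ μ0 > 0, ∀ μ ∈ Set.Ioo (0:ℝ) μ0,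
      IsChemical i (fun x =>
        (fun y : Fin N → ℝ =>
          βii * (y i)^2 + (∑ j ∈ J, β j * (y j)^2) + (∑ j ∈ J, γ j * y i * y j)
          + ∑ k ∈ J, ∑ l ∈ J.filter (fun l => k < l), δ k l * y k * y l)
        (fun k => x k - a k / μ)) := by
  refine ⟨1, one_pos, fun μ hμ x hxi hx => ?_⟩
  have hshift : (fun k => x k - a k / μ) = μ⁻¹ • (μ • x - a) := by
    ext k
    simp [mul_sub, hμ.1.ne', div_eq_inv_mul]
  change 0 ≤ QuadraticPart.eval i J βii β γ δ (fun k => x k - a k / μ)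
  rw [hshift, QuadraticPart.eval_smul]
  refine mul_nonneg (sq_nonneg _) (QuadraticPart.eval_sub_nonneg i J βii β γ δ hβ hδ hδsymm
    (ha i) (fun j _ => (ha j).le) h1 h2 (by simp [hxi]) fun j hj => ?_)
  exact mul_nonneg hμ.1.le (hx j (ne_of_mem_of_not_mem hj hiJ))

/-- Chemicality for quadratic parts (Lemma 3.7): under the sign conditions and
the linear inequalities on `a`, the translated quadratic form
`x̄ ↦ q_i(x̄ - a/μ)` is chemical with respect to coordinate `i` for every
sufficiently small `μ > 0`. -/
theorem stmt8 {N : ℕ} (i : Fin N) (J : Finset (Fin N)) (hiJ : i ∉ J)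
    (βii : ℝ) (hβii : 0 ≤ βii)
    (β γ : Fin N → ℝ) (δ : Fin N → Fin N → ℝ)
    (hβ : ∀ j ∈ J, 0 ≤ β j) (hγ : ∀ j ∈ J, γ j ≤ 0)
    (hδ : ∀ k ∈ J, ∀ l ∈ J, k ≠ l → 0 ≤ δ k l)
    (hδsymm : ∀ k l, δ k l = δ l k)
    (a : Fin N → ℝ) (ha : ∀ j, 0 < a j)
    (h1 : ∑ j ∈ J, (-γ j) * a j ≤ βii * a i)
    (h2 : ∀ j ∈ J, 2 * β j * a j + ∑ l ∈ J.erase j, δ j l * a l ≤ (-γ j) * a i) :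
    ∃ μ0 > 0, ∀ μ ∈ Set.Ioo (0:ℝ) μ0,
      IsChemical i (fun x =>
        (fun y : Fin N → ℝ =>
          βii * (y i)^2 + (∑ j ∈ J, β j * (y j)^2) + (∑ j ∈ J, γ j * y i * y j)
          + ∑ k ∈ J, ∑ l ∈ J.filter (fun l => k < l), δ k l * y k * y l)
        (fun k => x k - a k / μ)) :=
  stmt8_general i J hiJ βii β γ δ hβ hδ hδsymm a ha h1 h2
end

section
/- The one-wing-chaos system dx/dt = α₁ + α₂x + α₃x² − α₄xy, dy/dt = |α₂|x − α₅y + α₆z, dz/dt = |α₂|x − α₇z + α₈yz, with α₁ = 1/(μ²|α₂|), α₂ = 1/ε² + 27/(10ε) − 2/μ, α₃ = |α₂|, α₄ = (27/10)μ, α₅ = ε, α₆ = 10/27, α₇ = 1/ε + 27/10 + ε, α₈ = (27/10)εμ, is a chemical dynamical system for all ε, μ > 0 such that α₂ ≠ 0 (in particular for all small enough ε with μ fixed, where α₂ > 0). -/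
theorem IsChemical.of_eq_add_coord_mul {N : ℕ} {i : Fin N} {f g : (Fin N → ℝ) → ℝ}
    (h : (Fin N → ℝ) → ℝ) (hfg : ∀ x, f x = g x + x i * h x) (hg : IsChemical i g) :
    IsChemical i f := fun x hxi hx => by
  simpa [hfg, hxi] using hg x hxi hx

theorem stmt12_general (μ α₁ α₂ α₃ α₄ α₅ α₆ α₇ α₈ : ℝ)
    (h1 : α₁ = 1/(μ^2 * |α₂|)) (h6 : α₆ = 10/27) :
    IsChemical (0 : Fin 3)
      (fun v => α₁ + α₂ * v 0 + α₃ * (v 0)^2 - α₄ * v 0 * v 1) ∧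
    IsChemical (1 : Fin 3)
      (fun v => |α₂| * v 0 - α₅ * v 1 + α₆ * v 2) ∧
    IsChemical (2 : Fin 3)
      (fun v => |α₂| * v 0 - α₇ * v 2 + α₈ * v 1 * v 2) := by
  refine ⟨.of_eq_add_coord_mul (g := fun _ => α₁) (fun v => α₂ + α₃ * v 0 - α₄ * v 1)
      (fun v => by ring) fun _ _ _ => by rw [h1]; positivity,
    .of_eq_add_coord_mul (g := fun v => |α₂| * v 0 + α₆ * v 2) (fun _ => -α₅)
      (fun v => by ring) fun v _ hv => ?_,
    .of_eq_add_coord_mul (g := fun v => |α₂| * v 0) (fun v => α₈ * v 1 - α₇)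
      (fun v => by ring) fun v _ hv => ?_⟩
  · have hv0 : 0 ≤ v 0 := hv 0 (by decide)
    have hv2 : 0 ≤ v 2 := hv 2 (by decide)
    rw [h6]
    positivity
  · have hv0 : 0 ≤ v 0 := hv 0 (by decide)
    positivity

/-- The one-wing-chaos system is a chemical dynamical system for all
`ε, μ > 0` with `α₂ ≠ 0`. -/
theorem stmt12 (ε μ α₁ α₂ α₃ α₄ α₅ α₆ α₇ α₈ : ℝ)
    (hε : 0 < ε) (hμ : 0 < μ)
    (h2 : α₂ = 1/ε^2 + 27/(10*ε) - 2/μ) (hα₂ : α₂ ≠ 0)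
    (h1 : α₁ = 1/(μ^2 * |α₂|)) (h3 : α₃ = |α₂|) (h4 : α₄ = (27/10)*μ)
    (h5 : α₅ = ε) (h6 : α₆ = 10/27) (h7 : α₇ = 1/ε + 27/10 + ε)
    (h8 : α₈ = (27/10)*ε*μ) :
    IsChemical (0 : Fin 3)
      (fun v => α₁ + α₂ * v 0 + α₃ * (v 0)^2 - α₄ * v 0 * v 1) ∧
    IsChemical (1 : Fin 3)
      (fun v => |α₂| * v 0 - α₅ * v 1 + α₆ * v 2) ∧
    IsChemical (2 : Fin 3)
      (fun v => |α₂| * v 0 - α₇ * v 2 + α₈ * v 1 * v 2) :=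
  stmt12_general μ α₁ α₂ α₃ α₄ α₅ α₆ α₇ α₈ h1 h6
end

section
/- The two-wing-chaos system dx/dt = α₁ − α₂x + α₃x² + α₄y² − α₅xy, dy/dt = −α₆y + α₅xy + α₇yz − α₈xyz, dz/dt = α₆y − α₉z, with α₁ = 4/(εμ²) − 1/μ² − 1, α₂ = 4/μ − ε/μ, α₃ = ε, α₄ = 1/ε², α₅ = 1, α₆ = 2/(εμ), α₇ = μ/ε, α₈ = μ²/2, α₉ = 1, is a cubic chemical dynamical system for all ε ∈ (0, 4) and μ ∈ (0, 1) with 4/ε − 1 > μ², and it contains exactly one cubic monomial, namely −α₈xyz in the second equation. -/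
/-!
On the face `xᵢ = 0` of the nonnegative orthant only the terms of the `i`-th right-hand side not
divisible by `xᵢ` survive, namely `α₁ + α₄ y²` and `α₆ y`, and `α₁ ≥ 0` is the condition
`4/ε - 1 > μ²` divided by `μ²`. The cubic part of `ẏ` is read off by splitting it as a polynomial
of total degree at most two plus the single monomial `-α₈ xyz`, which cannot cancel against it.
-/

open MvPolynomial

namespace MvPolynomial

variable {σ R : Type*} [CommSemiring R]

theorem C_mul_X_mul_X_mul_X (a : R) (i j k : σ) :
    C a * X i * X j * X k =
      monomial (Finsupp.single i 1 + Finsupp.single j 1 + Finsupp.single k 1) a := by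
  simp only [X, C_mul_monomial, monomial_mul, mul_one]

theorem coeff_add_monomial_of_totalDegree_lt {q : MvPolynomial σ R} {m : σ →₀ ℕ} {n : ℕ} (c : R)
    (hm : (m.sum fun _ e => e) = n) (hq : q.totalDegree < n) : (q + monomial m c).coeff m = c := by
  classical
  rw [coeff_add, coeff_eq_zero_of_totalDegree_lt (hq.trans_eq hm.symm), coeff_monomial, if_pos rfl,
    zero_add]

theorem totalDegree_add_monomial_of_totalDegree_lt {q : MvPolynomial σ R} {m : σ →₀ ℕ} {n : ℕ}
    {c : R} (hc : c ≠ 0) (hm : (m.sum fun _ e => e) = n) (hq : q.totalDegree < n) :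
    (q + monomial m c).totalDegree = n := by
  rw [← hm, ← totalDegree_monomial m hc] at hq ⊢
  exact totalDegree_add_eq_right_of_totalDegree_lt hq

theorem support_filter_add_monomial_of_totalDegree_lt {q : MvPolynomial σ R} {m : σ →₀ ℕ} {n : ℕ}
    {c : R} (hc : c ≠ 0) (hm : (m.sum fun _ e => e) = n) (hq : q.totalDegree < n) :
    (q + monomial m c).support.filter (fun d => (d.sum fun _ e => e) = n) = {m} := by
  classical
  ext d
  simp only [Finset.mem_filter, Finset.mem_singleton]
  constructor
  · rintro ⟨hd, hdeg⟩
    rcases Finset.mem_union.1 ((support_add.trans (Finset.union_subset_union_right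
      support_monomial_subset)) hd) with hdq | hdm
    · exact absurd (hdeg ▸ le_totalDegree hdq) hq.not_ge
    · exact Finset.mem_singleton.1 hdm
  · rintro rfl
    exact ⟨by rwa [mem_support_iff, coeff_add_monomial_of_totalDegree_lt c hm hq], hm⟩

end MvPolynomial

noncomputable section

namespace TwoWing

def xyz : Fin 3 →₀ ℕ := Finsupp.single 0 1 + Finsupp.single 1 1 + Finsupp.single 2 1

theorem sum_xyz : (xyz.sum fun _ e => e) = 3 := by
  simp [xyz, Finsupp.sum_add_index]

def xDot (α₁ α₂ α₃ α₄ α₅ : ℝ) : MvPolynomial (Fin 3) ℝ :=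
  C α₁ - C α₂ * X 0 + C α₃ * X 0 ^ 2 + C α₄ * X 1 ^ 2 - C α₅ * X 0 * X 1

def yDotQuadratic (α₅ α₆ α₇ : ℝ) : MvPolynomial (Fin 3) ℝ :=
  -C α₆ * X 1 + C α₅ * X 0 * X 1 + C α₇ * X 1 * X 2

def yDot (α₅ α₆ α₇ α₈ : ℝ) : MvPolynomial (Fin 3) ℝ :=
  yDotQuadratic α₅ α₆ α₇ - C α₈ * X 0 * X 1 * X 2

def zDot (α₆ α₉ : ℝ) : MvPolynomial (Fin 3) ℝ :=
  C α₆ * X 1 - C α₉ * X 2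

theorem yDot_eq (α₅ α₆ α₇ α₈ : ℝ) :
    yDot α₅ α₆ α₇ α₈ = yDotQuadratic α₅ α₆ α₇ + monomial xyz (-α₈) := by
  rw [yDot, C_mul_X_mul_X_mul_X, xyz, map_neg, sub_eq_add_neg]

theorem totalDegree_xDot_le (α₁ α₂ α₃ α₄ α₅ : ℝ) : (xDot α₁ α₂ α₃ α₄ α₅).totalDegree ≤ 2 := by
  grw [xDot, totalDegree_sub, totalDegree_add, totalDegree_add, totalDegree_sub, totalDegree_mul,
    totalDegree_mul, totalDegree_mul, totalDegree_mul, totalDegree_mul, totalDegree_pow,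
    totalDegree_pow]
  simp

theorem totalDegree_yDotQuadratic_lt (α₅ α₆ α₇ : ℝ) : (yDotQuadratic α₅ α₆ α₇).totalDegree < 3 := by
  grw [yDotQuadratic, totalDegree_add, totalDegree_add, totalDegree_mul, totalDegree_mul,
    totalDegree_mul, totalDegree_mul, totalDegree_mul, totalDegree_neg]
  simp

theorem totalDegree_zDot_le (α₆ α₉ : ℝ) : (zDot α₆ α₉).totalDegree ≤ 2 := by
  grw [zDot, totalDegree_sub, totalDegree_mul, totalDegree_mul]
  simp

theorem isChemical_xDot {α₁ α₄ : ℝ} (α₂ α₃ α₅ : ℝ) (hα₁ : 0 ≤ α₁) (hα₄ : 0 ≤ α₄) :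
    IsChemical 0 fun v => eval v (xDot α₁ α₂ α₃ α₄ α₅) := by
  intro v hv _
  simp only [xDot, map_add, map_sub, map_mul, map_pow, eval_C, eval_X, hv]
  linarith [mul_nonneg hα₄ (sq_nonneg (v 1))]

theorem isChemical_yDot (α₅ α₆ α₇ α₈ : ℝ) : IsChemical 1 fun v => eval v (yDot α₅ α₆ α₇ α₈) := by
  intro v hv _
  simp [yDot, yDotQuadratic, hv]

theorem isChemical_zDot {α₆ : ℝ} (α₉ : ℝ) (hα₆ : 0 ≤ α₆) :
    IsChemical 2 fun v => eval v (zDot α₆ α₉) := by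
  intro v hv hnonneg
  simp only [zDot, map_sub, map_mul, eval_C, eval_X, hv, mul_zero, sub_zero]
  exact mul_nonneg hα₆ (hnonneg 1 (by decide))

end TwoWing

end

open TwoWing in
theorem stmt13_general (ε μ α₁ α₂ α₃ α₄ α₅ α₆ α₇ α₈ α₉ : ℝ)
    (hε : 0 < ε) (hμ : 0 < μ)
    (hεμ : 4/ε - 1 > μ^2)
    (h1 : α₁ = 4/(ε*μ^2) - 1/μ^2 - 1)
    (h4 : α₄ = 1/ε^2)
    (h6 : α₆ = 2/(ε*μ)) (h8 : α₈ = μ^2/2) :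
    (let p1 : MvPolynomial (Fin 3) ℝ :=
      C α₁ - C α₂ * X 0 + C α₃ * X 0 ^ 2 + C α₄ * X 1 ^ 2 - C α₅ * X 0 * X 1;
     let p2 : MvPolynomial (Fin 3) ℝ :=
      -C α₆ * X 1 + C α₅ * X 0 * X 1 + C α₇ * X 1 * X 2 - C α₈ * X 0 * X 1 * X 2;
     let p3 : MvPolynomial (Fin 3) ℝ := C α₆ * X 1 - C α₉ * X 2;
     IsChemical (0 : Fin 3) (fun v => eval v p1) ∧
     IsChemical (1 : Fin 3) (fun v => eval v p2) ∧
     IsChemical (2 : Fin 3) (fun v => eval v p3) ∧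
     p1.totalDegree ≤ 2 ∧ p3.totalDegree ≤ 2 ∧ p2.totalDegree = 3 ∧
     (p2.support.filter (fun d : Fin 3 →₀ ℕ => (d.sum fun _ e => e) = 3)) =
       {Finsupp.single 0 1 + Finsupp.single 1 1 + Finsupp.single 2 1} ∧
     p2.coeff (Finsupp.single 0 1 + Finsupp.single 1 1 + Finsupp.single 2 1)
       = -α₈) := by
  intro p1 p2 p3
  have hα₁ : 0 ≤ α₁ := by
    have hμ2 : 0 < μ ^ 2 := by positivity
    rw [h1, show 4/(ε*μ^2) - 1/μ^2 - 1 = ((4/ε - 1) - μ^2) / μ^2 by field_simp]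
    exact div_nonneg (by linarith) hμ2.le
  have hα₈ : -α₈ ≠ 0 := neg_ne_zero.2 (by rw [h8]; positivity)
  have hq := totalDegree_yDotQuadratic_lt α₅ α₆ α₇
  have hp2 : p2 = yDotQuadratic α₅ α₆ α₇ + monomial xyz (-α₈) := yDot_eq α₅ α₆ α₇ α₈
  refine ⟨isChemical_xDot α₂ α₃ α₅ hα₁ (by rw [h4]; positivity), isChemical_yDot α₅ α₆ α₇ α₈,
    isChemical_zDot α₉ (by rw [h6]; positivity), totalDegree_xDot_le α₁ α₂ α₃ α₄ α₅,
    totalDegree_zDot_le α₆ α₉, ?_, ?_, ?_⟩ <;> rw [hp2]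
  · exact totalDegree_add_monomial_of_totalDegree_lt hα₈ sum_xyz hq
  · exact support_filter_add_monomial_of_totalDegree_lt hα₈ sum_xyz hq
  · exact coeff_add_monomial_of_totalDegree_lt _ sum_xyz hq

/-- The two-wing-chaos system is a cubic chemical dynamical system for all
`ε ∈ (0,4)`, `μ ∈ (0,1)` with `4/ε - 1 > μ²`, containing exactly one cubic
monomial, namely `−α₈·xyz` in the second equation. -/
theorem stmt13 (ε μ α₁ α₂ α₃ α₄ α₅ α₆ α₇ α₈ α₉ : ℝ)
    (hε : 0 < ε) (hε4 : ε < 4) (hμ : 0 < μ) (hμ1 : μ < 1)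
    (hεμ : 4/ε - 1 > μ^2)
    (h1 : α₁ = 4/(ε*μ^2) - 1/μ^2 - 1) (h2 : α₂ = 4/μ - ε/μ)
    (h3 : α₃ = ε) (h4 : α₄ = 1/ε^2) (h5 : α₅ = 1)
    (h6 : α₆ = 2/(ε*μ)) (h7 : α₇ = μ/ε) (h8 : α₈ = μ^2/2) (h9 : α₉ = 1) :
    (let p1 : MvPolynomial (Fin 3) ℝ :=
      C α₁ - C α₂ * X 0 + C α₃ * X 0 ^ 2 + C α₄ * X 1 ^ 2 - C α₅ * X 0 * X 1;
     let p2 : MvPolynomial (Fin 3) ℝ :=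
      -C α₆ * X 1 + C α₅ * X 0 * X 1 + C α₇ * X 1 * X 2 - C α₈ * X 0 * X 1 * X 2;
     let p3 : MvPolynomial (Fin 3) ℝ := C α₆ * X 1 - C α₉ * X 2;
     IsChemical (0 : Fin 3) (fun v => eval v p1) ∧
     IsChemical (1 : Fin 3) (fun v => eval v p2) ∧
     IsChemical (2 : Fin 3) (fun v => eval v p3) ∧
     p1.totalDegree ≤ 2 ∧ p3.totalDegree ≤ 2 ∧ p2.totalDegree = 3 ∧
     (p2.support.filter (fun d : Fin 3 →₀ ℕ => (d.sum fun _ e => e) = 3)) =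
       {Finsupp.single 0 1 + Finsupp.single 1 1 + Finsupp.single 2 1} ∧
     p2.coeff (Finsupp.single 0 1 + Finsupp.single 1 1 + Finsupp.single 2 1)
       = -α₈) :=
  stmt13_general ε μ α₁ α₂ α₃ α₄ α₅ α₆ α₇ α₈ α₉ hε hμ hεμ h1 h4 h6 h8
end

section
/- The hidden-chaos system dx/dt = α₁ − α₂x + α₃y + α₄z + α₅x² − α₆xy − α₇xz, dy/dt = α₁ − α₈yz, dz/dt = −α₉z + α₇xz, with α₁ = 2/μ, α₂ = 1/μ, α₃ = 40/(620εμ + 57εμ²), α₄ = (3 − 31εμ)/(6ε), α₅ = ε(620 + 57μ)/200, α₆ = 1/5, α₇ = μ(620 + 57μ)/400, α₈ = μ²(620 + 57μ)/240, α₉ = 1/(2ε), is a quadratic chemical dynamical system for all ε > 0 and μ > 0 with εμ < 3/31: all nine parameters are positive and each right-hand side is chemical with respect to its own coordinate. -/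
section

variable {N : ℕ} {i : Fin N}

theorem isChemical_const (i : Fin N) {c : ℝ} (hc : 0 ≤ c) : IsChemical i fun _ => c :=
  fun _ _ _ => hc

theorem isChemical_const_mul_coord {c : ℝ} (hc : 0 ≤ c) {j : Fin N} (hj : j ≠ i) :
    IsChemical i fun x => c * x j :=
  fun _ _ hpos => mul_nonneg hc (hpos j hj)

theorem IsChemical.add {f g : (Fin N → ℝ) → ℝ} (hf : IsChemical i f) (hg : IsChemical i g) :
    IsChemical i fun x => f x + g x :=
  fun x hx hpos => add_nonneg (hf x hx hpos) (hg x hx hpos)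

theorem IsChemical.add_coord_mul {g : (Fin N → ℝ) → ℝ} (hg : IsChemical i g)
    (h : (Fin N → ℝ) → ℝ) : IsChemical i fun x => g x + x i * h x :=
  fun x hx hpos => by simpa [hx] using hg x hx hpos

end

theorem isChemical_hiddenChaos_dx (a₁ a₂ a₃ a₄ a₅ a₆ a₇ : ℝ)
    (h₁ : 0 ≤ a₁) (h₃ : 0 ≤ a₃) (h₄ : 0 ≤ a₄) :
    IsChemical (0 : Fin 3) fun v => a₁ - a₂ * v 0 + a₃ * v 1 + a₄ * v 2
      + a₅ * (v 0)^2 - a₆ * v 0 * v 1 - a₇ * v 0 * v 2 := by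
  have h : IsChemical (0 : Fin 3) fun v =>
      a₁ + a₃ * v 1 + a₄ * v 2 + v 0 * (-a₂ + a₅ * v 0 - a₆ * v 1 - a₇ * v 2) :=
    (((isChemical_const 0 h₁).add (isChemical_const_mul_coord h₃ (by decide))).add
      (isChemical_const_mul_coord h₄ (by decide))).add_coord_mul _
  convert h using 1
  funext v
  ring

theorem isChemical_hiddenChaos_dy (a₁ a₈ : ℝ) (h₁ : 0 ≤ a₁) :
    IsChemical (1 : Fin 3) fun v => a₁ - a₈ * v 1 * v 2 := by
  convert (isChemical_const 1 h₁).add_coord_mul fun v => -a₈ * v 2 using 1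
  funext v
  ring

theorem isChemical_hiddenChaos_dz (a₇ a₉ : ℝ) :
    IsChemical (2 : Fin 3) fun v => -a₉ * v 2 + a₇ * v 0 * v 2 := by
  convert (isChemical_const 2 le_rfl).add_coord_mul fun v => -a₉ + a₇ * v 0 using 1
  funext v
  ring

/-- The hidden-chaos system is a quadratic chemical dynamical system for all
`ε, μ > 0` with `εμ < 3/31`: all nine parameters are positive and each
right-hand side is chemical with respect to its own coordinate. -/
theorem stmt15 (ε μ α₁ α₂ α₃ α₄ α₅ α₆ α₇ α₈ α₉ : ℝ)
    (hε : 0 < ε) (hμ : 0 < μ) (hεμ : ε * μ < 3/31)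
    (h1 : α₁ = 2/μ) (h2 : α₂ = 1/μ)
    (h3 : α₃ = 40/(620*ε*μ + 57*ε*μ^2))
    (h4 : α₄ = (3 - 31*ε*μ)/(6*ε))
    (h5 : α₅ = ε*(620 + 57*μ)/200) (h6 : α₆ = 1/5)
    (h7 : α₇ = μ*(620 + 57*μ)/400) (h8 : α₈ = μ^2*(620 + 57*μ)/240)
    (h9 : α₉ = 1/(2*ε)) :
    (0 < α₁ ∧ 0 < α₂ ∧ 0 < α₃ ∧ 0 < α₄ ∧ 0 < α₅ ∧
      0 < α₆ ∧ 0 < α₇ ∧ 0 < α₈ ∧ 0 < α₉) ∧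
    IsChemical (0 : Fin 3)
      (fun v => α₁ - α₂ * v 0 + α₃ * v 1 + α₄ * v 2
        + α₅ * (v 0)^2 - α₆ * v 0 * v 1 - α₇ * v 0 * v 2) ∧
    IsChemical (1 : Fin 3) (fun v => α₁ - α₈ * v 1 * v 2) ∧
    IsChemical (2 : Fin 3) (fun v => -α₉ * v 2 + α₇ * v 0 * v 2) := by
  subst h1 h2 h3 h4 h5 h6 h7 h8 h9
  have hα₁ : 0 < 2 / μ := by positivity
  have hα₃ : 0 < 40 / (620*ε*μ + 57*ε*μ^2) := by positivity
  have hα₄ : 0 < (3 - 31*ε*μ) / (6*ε) := div_pos (by linarith) (by positivity)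
  refine ⟨⟨hα₁, by positivity, hα₃, hα₄, by positivity, by norm_num, by positivity,
    by positivity, by positivity⟩, ?_, ?_, ?_⟩
  · exact isChemical_hiddenChaos_dx _ _ _ _ _ _ _ hα₁.le hα₃.le hα₄.le
  · exact isChemical_hiddenChaos_dy _ _ hα₁.le
  · exact isChemical_hiddenChaos_dz _ _
end

section
/- (Non-negativity invariance of CDS solutions via the chemical condition, local version) Let f : ℝ^N → ℝ^N be a polynomial vector field such that each f_i is chemical with respect to coordinate i, and suppose additionally that f_i(x) > 0 whenever x_i = 0 and x_j ≥ 0 for all j ≠ i (strict chemicality). Then for any solution x(t) of dx/dt = f(x) with x(0) in the nonnegative orthant, x(t) remains in the nonnegative orthant for all t ≥ 0 in its interval of existence. -/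
/-!
Let `τ` be a time at which the trajectory is still in the orthant. Every coordinate that is
positive at `τ` stays positive for a while by continuity, and every coordinate that vanishes
at `τ` has positive derivative there by strict chemicality, so it becomes positive just after
`τ`. Hence the set of times spent in the orthant is closed and open to the right, and real
induction shows that it contains every `[0, t]` on which the solution exists.
-/

open Set Filter Topology

theorem HasDerivAt.eventually_lt_nhdsGT {f : ℝ → ℝ} {f' a : ℝ} (hf : HasDerivAt f f' a)
    (hf' : 0 < f') : ∀ᶠ b in 𝓝[>] a, f a < f b := by
  have hslope : ∀ᶠ b in 𝓝[>] a, 0 < slope f a b :=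
    (hasDerivAt_iff_tendsto_slope_left_right.1 hf).2.eventually (lt_mem_nhds hf')
  filter_upwards [hslope, self_mem_nhdsWithin] with b hb hab
  exact (slope_pos_iff_of_le (le_of_lt hab)).1 hb

theorem nonneg_of_hasDerivAt_of_pos_on_faces {ι : Type*} [Fintype ι] {x x' : ℝ → ι → ℝ}
    {a b : ℝ} (hx : ∀ t ∈ Ico a b, HasDerivAt x (x' t) t)
    (hface : ∀ t ∈ Ico a b, ∀ i, 0 ≤ x t → x t i = 0 → 0 < x' t i) (ha : 0 ≤ x a) :
    ∀ t ∈ Ico a b, 0 ≤ x t := by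
  intro t ht
  have hsub : Icc a t ⊆ Ico a b := Icc_subset_Ico_right ht.2
  have hclosed : IsClosed ({u | 0 ≤ x u} ∩ Icc a t) := by
    rw [inter_comm]
    exact ContinuousOn.preimage_isClosed_of_isClosed
      (fun u hu => (hx u (hsub hu)).continuousAt.continuousWithinAt) isClosed_Icc isClosed_Ici
  refine hclosed.Icc_subset_of_forall_mem_nhdsWithin ha (fun u ⟨hu, hut⟩ => ?_) ⟨ht.1, le_rfl⟩
  have huab : u ∈ Ico a b := Ico_subset_Ico_right ht.2.le hut
  have hcoord (i : ι) : HasDerivAt (fun v => x v i) (x' u i) u := hasDerivAt_pi.1 (hx u huab) i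
  refine eventually_all.2 fun i => ?_
  rcases (hu i).eq_or_lt with hzero | hpos
  · filter_upwards [(hcoord i).eventually_lt_nhdsGT (hface u huab i hu hzero.symm)] with v hv
    exact hzero ▸ hv.le
  · filter_upwards [nhdsWithin_le_nhds ((hcoord i).continuousAt.eventually (lt_mem_nhds hpos))]
      with v hv
    exact hv.le

theorem stmt16_general {N : ℕ} (F : Fin N → MvPolynomial (Fin N) ℝ)
    (hstrict : ∀ (i : Fin N) (x : Fin N → ℝ), x i = 0 → (∀ j, j ≠ i → 0 ≤ x j) →
      0 < MvPolynomial.eval x (F i))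
    (T : ℝ) (x : ℝ → Fin N → ℝ)
    (hx : ∀ t ∈ Set.Ico (0:ℝ) T,
      HasDerivAt x (fun i => MvPolynomial.eval (x t) (F i)) t)
    (h0 : ∀ i, 0 ≤ x 0 i) :
    ∀ t ∈ Set.Ico (0:ℝ) T, ∀ i, 0 ≤ x t i := fun t ht =>
  nonneg_of_hasDerivAt_of_pos_on_faces hx
    (fun s _ i hs hsi => hstrict i (x s) hsi fun j _ => hs j) h0 t ht

/-- Forward invariance of the nonnegative orthant for a strictly chemical
polynomial vector field. -/
theorem stmt16 {N : ℕ} (F : Fin N → MvPolynomial (Fin N) ℝ)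
    (hchem : ∀ (i : Fin N) (x : Fin N → ℝ), x i = 0 → (∀ j, j ≠ i → 0 ≤ x j) →
      0 ≤ MvPolynomial.eval x (F i))
    (hstrict : ∀ (i : Fin N) (x : Fin N → ℝ), x i = 0 → (∀ j, j ≠ i → 0 ≤ x j) →
      0 < MvPolynomial.eval x (F i))
    (T : ℝ) (x : ℝ → Fin N → ℝ)
    (hx : ∀ t ∈ Set.Ico (0:ℝ) T,
      HasDerivAt x (fun i => MvPolynomial.eval (x t) (F i)) t)
    (h0 : ∀ i, 0 ≤ x 0 i) :
    ∀ t ∈ Set.Ico (0:ℝ) T, ∀ i, 0 ≤ x t i :=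
  stmt16_general F hstrict T x hx h0
end

section
/- Under the translation x̄ = x + a/μ, ȳ = y + b/μ, z̄ = z + c/μ applied to the perturbed system dx/dt = −y + x² − (μ/a)xy, dy/dt = (27/10)x + z − εy, dz/dt = x + y − εz + (μ/c)yz (with a, b, c, ε, μ > 0), the resulting system has right-hand sides: dx̄/dt = a²/μ² + (−2a/μ + b/a)x̄ + x̄² − (μ/a)x̄ȳ; dȳ/dt = (1/μ)(−(27/10)a − c + εb) + (27/10)x̄ − εȳ + z̄; dz̄/dt = (1/μ)(−a + εc) + x̄ − (b/c + ε)z̄ + (μ/c)ȳz̄. Moreover, if b = a/ε² + 27a/(10ε) and c = a/ε, then for every sufficiently small μ > 0 this translated system is a chemical dynamical system. -/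
/-!
The three identities are polynomial identities once the denominators `μ`, `a`, `c` are
cleared. For the second part, the choice `b = a/ε² + 27a/(10ε)`, `c = a/ε` makes the constant
terms `-(27/10)a - c + εb` and `-a + εc` of the second and third translated equations vanish.
Then every monomial not divisible by an equation's own variable has a nonnegative coefficient
(the constant `a²/μ²` of the first equation, the `x̄`-coefficients `27/10` and `1`, the
`z̄`-coefficient `1` of the second), so the system is chemical for every `μ > 0`.
-/

lemma isChemical_zero_of_const_nonneg {α β γ : ℝ} (hα : 0 ≤ α) :
    IsChemical (0 : Fin 3) (fun v => α + β * v 0 + (v 0) ^ 2 - γ * v 0 * v 1) := by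
  intro v h0 _
  simpa [h0] using hα

lemma isChemical_one_of_nonneg {κ p q : ℝ} (hκ : 0 ≤ κ) (hp : 0 ≤ p) :
    IsChemical (1 : Fin 3) (fun v => κ + p * v 0 - q * v 1 + v 2) := by
  intro v h1 hv
  have h0 : 0 ≤ v 0 := hv 0 (by decide)
  have h2 : 0 ≤ v 2 := hv 2 (by decide)
  simp only [h1, mul_zero, sub_zero]
  positivity

lemma isChemical_two_of_const_nonneg {κ q r : ℝ} (hκ : 0 ≤ κ) :
    IsChemical (2 : Fin 3) (fun v => κ + v 0 - q * v 2 + r * v 1 * v 2) := by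
  intro v h2 hv
  have h0 : 0 ≤ v 0 := hv 0 (by decide)
  simp only [h2, mul_zero, sub_zero, add_zero]
  positivity

theorem stmt17_general (a b c ε : ℝ) (ha : 0 < a) (hc : 0 < c)
    (hε : 0 < ε) :
    (∀ μ > (0:ℝ), ∀ xb yb zb : ℝ,
      (-(yb - b/μ) + (xb - a/μ)^2 - (μ/a)*(xb - a/μ)*(yb - b/μ)
        = a^2/μ^2 + (-2*a/μ + b/a)*xb + xb^2 - (μ/a)*xb*yb) ∧
      ((27/10)*(xb - a/μ) + (zb - c/μ) - ε*(yb - b/μ)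
        = (1/μ)*(-(27/10)*a - c + ε*b) + (27/10)*xb - ε*yb + zb) ∧
      ((xb - a/μ) + (yb - b/μ) - ε*(zb - c/μ) + (μ/c)*(yb - b/μ)*(zb - c/μ)
        = (1/μ)*(-a + ε*c) + xb - (b/c + ε)*zb + (μ/c)*yb*zb)) ∧
    (b = a/ε^2 + 27*a/(10*ε) → c = a/ε →
      ∃ μ0 > 0, ∀ μ ∈ Set.Ioo (0:ℝ) μ0,
        IsChemical (0 : Fin 3) (fun v =>
          a^2/μ^2 + (-2*a/μ + b/a)*v 0 + (v 0)^2 - (μ/a)*v 0*v 1) ∧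
        IsChemical (1 : Fin 3) (fun v =>
          (1/μ)*(-(27/10)*a - c + ε*b) + (27/10)*v 0 - ε*v 1 + v 2) ∧
        IsChemical (2 : Fin 3) (fun v =>
          (1/μ)*(-a + ε*c) + v 0 - (b/c + ε)*v 2 + (μ/c)*v 1*v 2)) := by
  refine ⟨fun μ hμ xb yb zb => ?_, fun hb_eq hc_eq => ?_⟩
  · have := hμ.ne'
    have := ha.ne'
    have := hc.ne'
    exact ⟨by field_simp; ring, by field_simp; ring, by field_simp; ring⟩
  · have hconst₂ : -(27/10)*a - c + ε*b = 0 := by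
      subst hb_eq hc_eq; field_simp; ring
    have hconst₃ : -a + ε*c = 0 := by
      subst hc_eq; field_simp; ring
    refine ⟨1, one_pos, fun μ _ => ⟨?_, ?_, ?_⟩⟩
    · exact isChemical_zero_of_const_nonneg (by positivity)
    · exact isChemical_one_of_nonneg (by rw [hconst₂, mul_zero]) (by norm_num)
    · exact isChemical_two_of_const_nonneg (by rw [hconst₃, mul_zero])

/-- Translation of the perturbed Sprott-P system: the translated right-hand
sides equal the displayed expressions, and with `b = a/ε² + 27a/(10ε)` and
`c = a/ε` the translated system is a chemical dynamical system for every
sufficiently small `μ > 0`. -/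
theorem stmt17 (a b c ε : ℝ) (ha : 0 < a) (hb : 0 < b) (hc : 0 < c)
    (hε : 0 < ε) :
    (∀ μ > (0:ℝ), ∀ xb yb zb : ℝ,
      (-(yb - b/μ) + (xb - a/μ)^2 - (μ/a)*(xb - a/μ)*(yb - b/μ)
        = a^2/μ^2 + (-2*a/μ + b/a)*xb + xb^2 - (μ/a)*xb*yb) ∧
      ((27/10)*(xb - a/μ) + (zb - c/μ) - ε*(yb - b/μ)
        = (1/μ)*(-(27/10)*a - c + ε*b) + (27/10)*xb - ε*yb + zb) ∧
      ((xb - a/μ) + (yb - b/μ) - ε*(zb - c/μ) + (μ/c)*(yb - b/μ)*(zb - c/μ)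
        = (1/μ)*(-a + ε*c) + xb - (b/c + ε)*zb + (μ/c)*yb*zb)) ∧
    (b = a/ε^2 + 27*a/(10*ε) → c = a/ε →
      ∃ μ0 > 0, ∀ μ ∈ Set.Ioo (0:ℝ) μ0,
        IsChemical (0 : Fin 3) (fun v =>
          a^2/μ^2 + (-2*a/μ + b/a)*v 0 + (v 0)^2 - (μ/a)*v 0*v 1) ∧
        IsChemical (1 : Fin 3) (fun v =>
          (1/μ)*(-(27/10)*a - c + ε*b) + (27/10)*v 0 - ε*v 1 + v 2) ∧
        IsChemical (2 : Fin 3) (fun v =>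
          (1/μ)*(-a + ε*c) + v 0 - (b/c + ε)*v 2 + (μ/c)*v 1*v 2)) :=
  stmt17_general a b c ε ha hc hε
end

section
/- Under the translation x̄ = x + a/μ, ȳ = y + b/μ, z̄ = z + c/μ applied to dx/dt = −1 + y² + ε(x² − xy), dy/dt = −xz − (μ/b)xyz, dz/dt = y − z, the resulting system is: dx̄/dt = [(1/μ²)(b² + εa² − εab) − 1] + (ε/μ)(b − 2a)x̄ + (1/μ)(−2b + εa)ȳ + εx̄² + ȳ² − εx̄ȳ; dȳ/dt = −(1/μ)(ac/b)ȳ + (c/b)x̄ȳ + (a/b)ȳz̄ − (μ/b)x̄ȳz̄; dz̄/dt = (1/μ)(c − b) + ȳ − z̄. Moreover, with a = 2b/ε and c = b, this translated system is a chemical dynamical system for every sufficiently small μ > 0 (specifically, all monomials not divisible by the corresponding barred variable have nonnegative coefficients: in equation 1 the constant is (b²/μ²)(1 + 4/ε − 2) − 1 = (b²/μ²)(4/ε − 1) − 1 > 0 for small μ when ε < 4, the ȳ coefficient is (1/μ)(−2b + 2b) = 0, and ȳ² has coefficient 1 > 0; in equation 2 all monomials are divisible by ȳ; in equation 3 the constant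 is 0 and ȳ has coefficient 1). -/
theorem IsChemical.of_forall_eq_zero {N : ℕ} {i : Fin N} {f : (Fin N → ℝ) → ℝ}
    (h : ∀ x : Fin N → ℝ, x i = 0 → f x = 0) : IsChemical i f :=
  fun x hx _ => (h x hx).ge

theorem exists_pos_forall_one_le_one_div_sq_mul {K : ℝ} (hK : 0 < K) :
    ∃ μ0 > 0, ∀ μ ∈ Set.Ioo (0 : ℝ) μ0, 1 ≤ (1 / μ ^ 2) * K := by
  refine ⟨√K, Real.sqrt_pos.mpr hK, fun μ ⟨hμ, hμK⟩ => ?_⟩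
  have hsq : μ ^ 2 < K := (Real.lt_sqrt hμ.le).mp hμK
  rw [one_div_mul_eq_div, one_le_div (by positivity)]
  exact hsq.le

theorem sprott_constant_term_eq {b ε : ℝ} (hε : ε ≠ 0) :
    b ^ 2 + ε * (2 * b / ε) ^ 2 - ε * (2 * b / ε) * b = b ^ 2 * (4 - ε) / ε := by
  field_simp
  ring

/-- Translation of the perturbed Sprott-C system: the translated right-hand
sides equal the displayed expressions and, with `a = 2b/ε`, `c = b`, `b > 0`
and `0 < ε < 4`, the translated system is a chemical dynamical system for
every sufficiently small `μ > 0`. -/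
theorem stmt18 (a b c ε : ℝ) (hb : 0 < b) (hε : 0 < ε) (hε4 : ε < 4)
    (hab : a = 2*b/ε) (hcb : c = b) :
    (∀ μ > (0:ℝ), ∀ xb yb zb : ℝ,
      (-1 + (yb - b/μ)^2 + ε*((xb - a/μ)^2 - (xb - a/μ)*(yb - b/μ))
        = ((1/μ^2)*(b^2 + ε*a^2 - ε*a*b) - 1) + (ε/μ)*(b - 2*a)*xb
          + (1/μ)*(-2*b + ε*a)*yb + ε*xb^2 + yb^2 - ε*xb*yb) ∧
      (-(xb - a/μ)*(zb - c/μ) - (μ/b)*(xb - a/μ)*(yb - b/μ)*(zb - c/μ)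
        = -(1/μ)*(a*c/b)*yb + (c/b)*xb*yb + (a/b)*yb*zb - (μ/b)*xb*yb*zb) ∧
      ((yb - b/μ) - (zb - c/μ) = (1/μ)*(c - b) + yb - zb)) ∧
    (∃ μ0 > 0, ∀ μ ∈ Set.Ioo (0:ℝ) μ0,
      IsChemical (0 : Fin 3) (fun v =>
        ((1/μ^2)*(b^2 + ε*a^2 - ε*a*b) - 1) + (ε/μ)*(b - 2*a)*v 0
          + (1/μ)*(-2*b + ε*a)*v 1 + ε*(v 0)^2 + (v 1)^2 - ε*v 0*v 1) ∧
      IsChemical (1 : Fin 3) (fun v =>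
        -(1/μ)*(a*c/b)*v 1 + (c/b)*v 0*v 1 + (a/b)*v 1*v 2
          - (μ/b)*v 0*v 1*v 2) ∧
      IsChemical (2 : Fin 3) (fun v => (1/μ)*(c - b) + v 1 - v 2)) := by
  subst a c
  have hb0 := hb.ne'
  have hε0 := hε.ne'
  refine ⟨fun μ hμ x y z => ?_, ?_⟩
  · have hμ0 := hμ.ne'
    exact ⟨by field_simp; ring, by field_simp; ring, by ring⟩
  have hK : 0 < b ^ 2 * (4 - ε) / ε := by
    have : 0 < 4 - ε := by linarith
    positivity
  obtain ⟨μ0, hμ0, hsmall⟩ := exists_pos_forall_one_le_one_div_sq_mul hK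
  refine ⟨μ0, hμ0, fun μ hμ => ⟨fun v hv0 _ => ?_,
    IsChemical.of_forall_eq_zero fun v hv1 => by simp [hv1], fun v hv2 hnn => ?_⟩⟩
  · have hconst := hsmall μ hμ
    rw [← sprott_constant_term_eq hε0] at hconst
    have hlin : -2 * b + ε * (2 * b / ε) = 0 := by field_simp; ring
    simp only [hv0, hlin]
    nlinarith [sq_nonneg (v 1)]
  · have := hnn 1 (by decide)
    simp only [hv2, sub_self]
    linarith
end
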